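/- Theorem 1 (Weyl-criterion form, conditional on the plane-wave asymptotics of the eigenfunctions). Let ω ∈ ℝ and suppose there exists φ : ℕ → ℂ solving the eigenvalue recurrence for ω which has plane-wave asymptotics with some amplitude A ≠ 0. Then ω lies in the approximate point spectrum of H_I on ℓ²(ℕ, ℂ): there exists a sequence v_k : ℕ → ℂ of square-summable sequences with Σ_n |v_k n|² = 1 for each k, such that each H_I v_k is square-summable and Σ_n |(H_I v_k) n − ω·(v_k n)|² → 0 as k → ∞. -/

import Mathlib

/-- ξ(y) = √(y² + 1/16). -/
noncomputable def xi (y : ℝ) : ℝ := Real.sqrt (y ^ 2 + 1 / 16)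

/-- χ(x) = log(2·√(4x² + 4x + 1) + √(16x² + 16x + 5)). -/
noncomputable def chi (x : ℝ) : ℝ :=
  Real.log (2 * Real.sqrt (4 * x ^ 2 + 4 * x + 1) + Real.sqrt (16 * x ^ 2 + 16 * x + 5))

/-- f_s(x) = ξ(x+1/2)^(−1/2)·(A·exp(i·ω·χ(x)) − s·(conj A)·exp(−i·ω·χ(x))). -/
noncomputable def fpw (A : ℂ) (ω s x : ℝ) : ℂ :=
  ((xi (x + 1/2) ^ (-(1/2) : ℝ) : ℝ) : ℂ) *
    (A * Complex.exp (Complex.I * ω * chi x) -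
      (s : ℂ) * (starRingEnd ℂ) A * Complex.exp (-(Complex.I * ω * chi x)))

/-- φ : ℕ → ℂ solves the eigenvalue recurrence for ω (φ n is the coefficient at spin
j = n/2): φ 0 = 0 and ω·φ n = i·(n/2 + 3/4)·φ(n+1) − i·(n/2 + 1/4)·φ(n−1) for n ≥ 1. -/
def SolvesRec (ω : ℝ) (φ : ℕ → ℂ) : Prop :=
  φ 0 = 0 ∧ ∀ n : ℕ, 1 ≤ n →
    (ω : ℂ) * φ n =
      Complex.I * ((n : ℂ) / 2 + 3 / 4) * φ (n + 1) -
        Complex.I * ((n : ℂ) / 2 + 1 / 4) * φ (n - 1)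

/-- φ has plane-wave asymptotics with amplitude A: there exist C > 0, Δ > 1 and N₀
such that |φ n − f_{(−1)^n}(n/2)| ≤ C·(n/2)^(−Δ) for all n ≥ N₀. -/
def PlaneWaveAsymp (A : ℂ) (ω : ℝ) (φ : ℕ → ℂ) : Prop :=
  ∃ C : ℝ, 0 < C ∧ ∃ Δ : ℝ, 1 < Δ ∧ ∃ N₀ : ℕ, ∀ n : ℕ, N₀ ≤ n →
    ‖φ n - fpw A ω ((-1 : ℝ) ^ n) ((n : ℝ) / 2)‖ ≤ C * ((n : ℝ) / 2) ^ (-Δ)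

/-- The operator H_I in the spin-network basis: (H_I a) 0 = 0,
(H_I a) 1 = i·(5/4)·a 2, (H_I a) n = i·(n/2 + 3/4)·a(n+1) − i·(n/2 + 1/4)·a(n−1) for n ≥ 2. -/
noncomputable def HI (a : ℕ → ℂ) (n : ℕ) : ℂ :=
  if n = 0 then 0
  else if n = 1 then Complex.I * (5 / 4) * a 2
  else Complex.I * ((n : ℂ) / 2 + 3 / 4) * a (n + 1) -
        Complex.I * ((n : ℂ) / 2 + 1 / 4) * a (n - 1)

section AuxLemmas
lemma xi_pos (y : ℝ) : 0 < xi y := by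
  apply Real.sqrt_pos.2; positivity

lemma le_xi (y : ℝ) (hy : 0 ≤ y) : y ≤ xi y := by
  rw [xi, show y ^ 2 + 1/16 = y^2 + 1/16 by ring]
  calc y = Real.sqrt (y^2) := by rw [Real.sqrt_sq hy]
  _ ≤ _ := by apply Real.sqrt_le_sqrt; nlinarith

lemma xi_le (y : ℝ) (hy : 0 ≤ y) : xi y ≤ y + 1/4 := by
  rw [xi]
  calc Real.sqrt (y^2 + 1/16) ≤ Real.sqrt ((y + 1/4)^2) := by
        apply Real.sqrt_le_sqrt; nlinarith
  _ = y + 1/4 := Real.sqrt_sq (by linarith)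

lemma sqrt_v_lb (x : ℝ) (hx : 0 ≤ x) : 4*x + 1 ≤ Real.sqrt (16 * x ^ 2 + 16 * x + 5) := by
  calc (4*x+1 : ℝ) = Real.sqrt ((4*x+1)^2) := (Real.sqrt_sq (by linarith)).symm
  _ ≤ _ := by apply Real.sqrt_le_sqrt; nlinarith

lemma sqrt_v_ub (x : ℝ) (hx : 0 ≤ x) : Real.sqrt (16 * x ^ 2 + 16 * x + 5) ≤ 4*x + 3 := by
  calc Real.sqrt (16 * x ^ 2 + 16 * x + 5) ≤ Real.sqrt ((4*x+3)^2) := by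
        apply Real.sqrt_le_sqrt; nlinarith
  _ = 4*x+3 := Real.sqrt_sq (by linarith)

lemma chi_eq (x : ℝ) (hx : 0 ≤ x) :
    chi x = Real.log (4*x + 2 + Real.sqrt (16 * x ^ 2 + 16 * x + 5)) := by
  rw [chi, show 4 * x ^ 2 + 4 * x + 1 = (2*x+1)^2 by ring, Real.sqrt_sq (by linarith)]
  ring_nf

lemma chi_incr_nonneg (x : ℝ) (hx : 0 ≤ x) : 0 ≤ chi (x + 1/2) - chi x := by
  rw [chi_eq x hx, chi_eq (x+1/2) (by linarith), sub_nonneg]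
  apply Real.log_le_log
  · have := sqrt_v_lb x hx; linarith
  · have h := Real.sqrt_le_sqrt (show 16*x^2+16*x+5 ≤ 16*(x+1/2)^2+16*(x+1/2)+5 by nlinarith)
    linarith

lemma chi_incr_le (x : ℝ) (hx : 1 ≤ x) : chi (x + 1/2) - chi x ≤ 1 / x := by
  have hx0 : (0:ℝ) ≤ x := by linarith
  rw [chi_eq x hx0, chi_eq (x+1/2) (by linarith)]
  set a := 4*x + 2 + Real.sqrt (16 * x ^ 2 + 16 * x + 5) with ha
  set b := 4*(x+1/2) + 2 + Real.sqrt (16 * (x+1/2) ^ 2 + 16 * (x+1/2) + 5) with hb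
  have hav : 8*x + 3 ≤ a := by have := sqrt_v_lb x hx0; simp [ha]; linarith
  have ha0 : 0 < a := by linarith
  have hba : b - a ≤ 6 := by
    have h1 := sqrt_v_ub (x+1/2) (by linarith)
    have h2 := sqrt_v_lb x hx0
    simp only [ha, hb]; nlinarith
  have hb0 : 0 < b := by
    have := Real.sqrt_nonneg (16 * (x+1/2) ^ 2 + 16 * (x+1/2) + 5)
    simp only [hb]; nlinarith
  calc Real.log b - Real.log a = Real.log (b / a) := (Real.log_div (ne_of_gt hb0) (ne_of_gt ha0)).symm
  _ ≤ b / a - 1 := Real.log_le_sub_one_of_pos (by positivity)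
  _ = (b - a) / a := by field_simp
  _ ≤ 6 / a := by gcongr
  _ ≤ 1 / x := by
      rw [div_le_div_iff₀ ha0 (by linarith)]; nlinarith

lemma conj_part (A : ℂ) (t : ℝ) :
    (starRingEnd ℂ) A * Complex.exp (-(Complex.I * t)) =
      (starRingEnd ℂ) (A * Complex.exp (Complex.I * t)) := by
  rw [map_mul, ← Complex.exp_conj]
  congr 2
  simp [Complex.conj_I]

lemma norm_two_im_I (z : ℂ) : ‖((2 * z.im : ℝ):ℂ) * Complex.I‖ = 2 * |z.im| := by
  rw [norm_mul, Complex.norm_real, Complex.norm_I, Real.norm_eq_abs, abs_mul]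
  norm_num

lemma norm_two_re (z : ℂ) : ‖((2 * z.re : ℝ) : ℂ)‖ = 2 * |z.re| := by
  rw [Complex.norm_real, Real.norm_eq_abs, abs_mul]
  norm_num

lemma norm_fpw_one (A : ℂ) (ω x : ℝ) :
    ‖fpw A ω 1 x‖ = xi (x + 1/2) ^ (-(1/2) : ℝ) *
      (2 * |(A * Complex.exp (Complex.I * (ω * chi x))).im|) := by
  have h : Complex.I * (ω:ℂ) * (chi x : ℂ) = Complex.I * ((ω * chi x : ℝ) : ℂ) := by
    push_cast; ring
  have hxi : (0:ℝ) ≤ xi (x + 1/2) ^ (-(1/2) : ℝ) := Real.rpow_nonneg (le_of_lt (xi_pos _)) _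
  rw [fpw, h]
  rw [show ((1:ℝ):ℂ) = 1 by norm_num, one_mul, conj_part]
  set z := A * Complex.exp (Complex.I * ((ω * chi x : ℝ):ℂ)) with hz
  rw [Complex.sub_conj, norm_mul, norm_two_im_I, Complex.norm_real, Real.norm_eq_abs,
    abs_of_nonneg hxi]
  congr 2
  rw [hz]; push_cast; ring_nf

lemma norm_fpw_neg_one (A : ℂ) (ω x : ℝ) :
    ‖fpw A ω (-1) x‖ = xi (x + 1/2) ^ (-(1/2) : ℝ) *
      (2 * |(A * Complex.exp (Complex.I * (ω * chi x))).re|) := by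
  have h : Complex.I * (ω:ℂ) * (chi x : ℂ) = Complex.I * ((ω * chi x : ℝ) : ℂ) := by
    push_cast; ring
  have hxi : (0:ℝ) ≤ xi (x + 1/2) ^ (-(1/2) : ℝ) := Real.rpow_nonneg (le_of_lt (xi_pos _)) _
  rw [fpw, h]
  rw [show ((-1:ℝ):ℂ) = -1 by norm_num, mul_assoc, conj_part]
  set z := A * Complex.exp (Complex.I * ((ω * chi x : ℝ):ℂ)) with hz
  rw [show z - -1 * (starRingEnd ℂ) z = z + (starRingEnd ℂ) z by ring, Complex.add_conj,
    norm_mul, norm_two_re, Complex.norm_real, Real.norm_eq_abs, abs_of_nonneg hxi]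
  congr 2
  rw [hz]; push_cast; ring_nf

lemma norm_exp_I_mul (t : ℝ) : ‖Complex.exp (Complex.I * t)‖ = 1 := by
  simp [Complex.norm_exp]

lemma norm_exp_neg_I_mul (t : ℝ) : ‖Complex.exp (-(Complex.I * t))‖ = 1 := by
  simp [Complex.norm_exp]

lemma norm_fpw_le (A : ℂ) (ω x s : ℝ) (hx : 0 < x) :
    ‖fpw A ω s x‖ ≤ x ^ (-(1/2):ℝ) * ((1 + |s|) * ‖A‖) := by
  have hxi : x ≤ xi (x + 1/2) := le_trans (by linarith) (le_xi _ (by linarith))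
  have h1 : xi (x + 1/2) ^ (-(1/2):ℝ) ≤ x ^ (-(1/2):ℝ) :=
    Real.rpow_le_rpow_of_nonpos hx hxi (by norm_num)
  have h2 : ‖A * Complex.exp (Complex.I * ω * chi x) -
      (s : ℂ) * (starRingEnd ℂ) A * Complex.exp (-(Complex.I * ω * chi x))‖ ≤
      (1 + |s|) * ‖A‖ := by
    refine le_trans (norm_sub_le _ _) ?_
    have e1 : ‖A * Complex.exp (Complex.I * ω * chi x)‖ = ‖A‖ := by
      rw [show Complex.I * ω * chi x = Complex.I * ((ω * chi x : ℝ) : ℂ) by push_cast; ring,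
        norm_mul, norm_exp_I_mul, mul_one]
    have e2 : ‖(s : ℂ) * (starRingEnd ℂ) A * Complex.exp (-(Complex.I * ω * chi x))‖ =
        |s| * ‖A‖ := by
      rw [show Complex.I * ω * chi x = Complex.I * ((ω * chi x : ℝ) : ℂ) by push_cast; ring,
        norm_mul, norm_mul, norm_exp_neg_I_mul, mul_one, Complex.norm_real,
        Real.norm_eq_abs, Complex.norm_conj]
    rw [e1, e2]; ring_nf; rfl
  rw [fpw, norm_mul, Complex.norm_real, Real.norm_eq_abs,
    abs_of_nonneg (Real.rpow_nonneg (le_of_lt (xi_pos _)) _)]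
  exact mul_le_mul h1 h2 (norm_nonneg _) (Real.rpow_nonneg (le_of_lt hx) _)

lemma phi_upper {A : ℂ} {ω C Δ : ℝ} {N₀ : ℕ} {φ : ℕ → ℂ} (hC : 0 < C) (hΔ : 1 < Δ)
    (hb : ∀ n : ℕ, N₀ ≤ n → ‖φ n - fpw A ω ((-1 : ℝ) ^ n) ((n : ℝ) / 2)‖ ≤ C * ((n : ℝ) / 2) ^ (-Δ)) :
    ∀ n : ℕ, max N₀ 2 ≤ n → ‖φ n‖ ≤ (2 * ‖A‖ + C) * ((n : ℝ) / 2) ^ (-(1/2) : ℝ) := by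
  intro n hn
  have hn2 : (2:ℕ) ≤ n := le_trans (le_max_right _ _) hn
  have hx : (1:ℝ) ≤ (n:ℝ)/2 := by
    have : (2:ℝ) ≤ (n:ℝ) := by exact_mod_cast hn2
    linarith
  have hx0 : (0:ℝ) < (n:ℝ)/2 := by linarith
  have h1 : ‖φ n‖ ≤ ‖fpw A ω ((-1 : ℝ) ^ n) ((n : ℝ) / 2)‖ + C * ((n : ℝ) / 2) ^ (-Δ) := by
    have := hb n (le_trans (le_max_left _ _) hn)
    calc ‖φ n‖ = ‖fpw A ω ((-1 : ℝ) ^ n) ((n : ℝ) / 2) + (φ n - fpw A ω ((-1 : ℝ) ^ n) ((n : ℝ) / 2))‖ := by ring_nf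
    _ ≤ _ := le_trans (norm_add_le _ _) (by linarith)
  have h2 : ‖fpw A ω ((-1 : ℝ) ^ n) ((n : ℝ) / 2)‖ ≤ ((n:ℝ)/2) ^ (-(1/2):ℝ) * (2 * ‖A‖) := by
    refine le_trans (norm_fpw_le A ω _ _ hx0) ?_
    have : |(-1:ℝ)^n| = 1 := by rw [abs_pow]; norm_num
    rw [this]; norm_num
  have h3 : C * ((n : ℝ) / 2) ^ (-Δ) ≤ C * ((n : ℝ) / 2) ^ (-(1/2):ℝ) := by
    apply mul_le_mul_of_nonneg_left _ (le_of_lt hC)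
    exact Real.rpow_le_rpow_of_exponent_le hx (by linarith)
  calc ‖φ n‖ ≤ ((n:ℝ)/2) ^ (-(1/2):ℝ) * (2 * ‖A‖) + C * ((n : ℝ) / 2) ^ (-(1/2):ℝ) := by linarith
  _ = (2 * ‖A‖ + C) * ((n : ℝ) / 2) ^ (-(1/2) : ℝ) := by ring

/-- From the decay bound and positivity of xi: a bound on the Im/Re parts. -/
lemma part_bound {C Δ x w r : ℝ} (hx : 1 ≤ x) (hw : 0 < w) (hw4 : w ≤ 4 * x) (hr : 0 ≤ r)
    (h : w ^ (-(1/2) : ℝ) * (2 * r) ≤ C * x ^ (-Δ)) :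
    r ≤ C * Real.sqrt x * x ^ (-Δ) := by
  have hx0 : (0:ℝ) < x := by linarith
  have h1 : (4*x) ^ (-(1/2):ℝ) ≤ w ^ (-(1/2):ℝ) :=
    Real.rpow_le_rpow_of_nonpos hw hw4 (by norm_num)
  have h2 : (4*x) ^ (-(1/2):ℝ) * (2*r) ≤ C * x ^ (-Δ) :=
    le_trans (mul_le_mul_of_nonneg_right h1 (by linarith)) h
  have h4x : (0:ℝ) < (4*x) ^ (-(1/2):ℝ) := Real.rpow_pos_of_pos (by linarith) _
  have h3 : 2 * r ≤ C * x ^ (-Δ) / (4*x) ^ (-(1/2):ℝ) := by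
    rw [le_div_iff₀ h4x]; linarith [h2]
  have h5 : ((4*x) ^ (-(1/2):ℝ))⁻¹ = Real.sqrt (4*x) := by
    rw [show (-(1/2):ℝ) = -(1/2) from rfl, Real.rpow_neg (by linarith), inv_inv,
      ← Real.sqrt_eq_rpow]
  have h6 : Real.sqrt (4*x) = 2 * Real.sqrt x := by
    rw [show (4:ℝ)*x = 2^2 * x by ring, Real.sqrt_mul (by positivity), Real.sqrt_sq (by norm_num)]
  rw [div_eq_mul_inv, h5, h6] at h3
  nlinarith [Real.sqrt_nonneg x, Real.rpow_nonneg (le_of_lt hx0) (-Δ)]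

lemma amp_eq_zero {A : ℂ} {ω C Δ : ℝ} {N₀ : ℕ} (hC : 0 < C) (hΔ : 1 < Δ)
    (hb : ∀ n : ℕ, N₀ ≤ n → ‖fpw A ω ((-1:ℝ)^n) ((n:ℝ)/2)‖ ≤ C * ((n:ℝ)/2)^(-Δ)) :
    A = 0 := by
  set M₁ : ℕ := max (max N₀ 2) ⌈|ω|⌉₊ with hM₁
  have key : ∀ m : ℕ, M₁ ≤ m →
      ‖A‖ ≤ 4*C * (m:ℝ) ^ ((1:ℝ)/2 - Δ) + 2*(‖A‖*|ω|) * (1/(m:ℝ)) := by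
    intro m hm
    have hm2 : (2:ℕ) ≤ m := le_trans (le_trans (le_max_right _ _) (le_max_left _ _)) hm
    have hmN : N₀ ≤ m := le_trans (le_trans (le_max_left _ _) (le_max_left _ _)) hm
    have hmω : |ω| ≤ (m:ℝ) := le_trans (Nat.le_ceil _) (by exact_mod_cast le_trans (le_max_right _ _) hm)
    set x : ℝ := (m:ℝ) with hxdef
    have h2x : (2:ℝ) ≤ x := by rw [hxdef]; exact_mod_cast hm2
    have hx : (1:ℝ) ≤ x := by linarith
    have hx0 : (0:ℝ) < x := by linarith
    -- even point
    have heven := hb (2*m) (le_trans hmN (by omega))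
    rw [show ((-1:ℝ)^(2*m)) = 1 from Even.neg_one_pow ⟨m, by ring⟩,
      show (((2*m : ℕ):ℝ)/2) = x by push_cast; ring, norm_fpw_one] at heven
    set z : ℂ := A * Complex.exp (Complex.I * ((ω:ℂ) * (chi x : ℂ))) with hz
    have hIm : |z.im| ≤ C * Real.sqrt x * x ^ (-Δ) := by
      refine part_bound hx (xi_pos _) ?_ (abs_nonneg _) heven
      have := xi_le (x + 1/2) (by linarith); linarith
    -- odd point
    have hodd := hb (2*m+1) (le_trans hmN (by omega))
    rw [show ((-1:ℝ)^(2*m+1)) = -1 from Odd.neg_one_pow ⟨m, rfl⟩,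
      show (((2*m+1 : ℕ):ℝ)/2) = x + 1/2 by push_cast; ring, norm_fpw_neg_one] at hodd
    set z' : ℂ := A * Complex.exp (Complex.I * ((ω:ℂ) * (chi (x+1/2) : ℂ))) with hz'
    have hodd2 : xi (x + 1/2 + 1/2) ^ (-(1/2) : ℝ) * (2 * |z'.re|) ≤ C * x ^ (-Δ) := by
      refine le_trans hodd (mul_le_mul_of_nonneg_left ?_ (le_of_lt hC))
      exact Real.rpow_le_rpow_of_nonpos hx0 (by linarith) (by linarith)
    have hRe : |z'.re| ≤ C * Real.sqrt x * x ^ (-Δ) := by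
      refine part_bound hx (xi_pos _) ?_ (abs_nonneg _) hodd2
      have := xi_le (x + 1/2 + 1/2) (by linarith); linarith
    -- phase difference
    set d : ℝ := ω * chi x - ω * chi (x + 1/2) with hd
    have hdch1 := chi_incr_nonneg x (le_of_lt hx0)
    have hdch2 := chi_incr_le x hx
    have hphase : |d| ≤ |ω| * (1/x) := by
      rw [hd, show ω * chi x - ω * chi (x+1/2) = -(ω * (chi (x+1/2) - chi x)) by ring,
        abs_neg, abs_mul]
      refine mul_le_mul_of_nonneg_left ?_ (abs_nonneg _)
      rw [abs_of_nonneg hdch1]; exact hdch2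
    have hphase1 : |d| ≤ 1 := by
      refine le_trans hphase ?_
      rw [mul_one_div]
      exact (div_le_one hx0).2 hmω
    have hzz' : ‖z - z'‖ ≤ 2 * (‖A‖ * |ω|) * (1/x) := by
      have hexp : Complex.exp (Complex.I * ((ω:ℂ) * ((chi (x+1/2):ℝ):ℂ))) *
          Complex.exp (Complex.I * ((d:ℝ):ℂ)) =
          Complex.exp (Complex.I * ((ω:ℂ) * ((chi x:ℝ):ℂ))) := by
        rw [← Complex.exp_add]
        congr 1
        rw [hd]; push_cast; ring
      have hfact : z - z' = z' * (Complex.exp (Complex.I * ((d:ℝ):ℂ)) - 1) := by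
        rw [hz, hz', ← hexp]; ring
      rw [hfact, norm_mul]
      have h1 : ‖z'‖ = ‖A‖ := by
        rw [hz', show Complex.I * ((ω:ℂ) * ((chi (x+1/2):ℝ):ℂ)) =
          Complex.I * ((ω * chi (x+1/2) : ℝ) : ℂ) by push_cast; ring, norm_mul,
          norm_exp_I_mul, mul_one]
      have habs : ‖Complex.I * ((d:ℝ):ℂ)‖ = |d| := by
        rw [norm_mul, Complex.norm_I, one_mul, Complex.norm_real, Real.norm_eq_abs]
      have h2 : ‖Complex.exp (Complex.I * ((d:ℝ):ℂ)) - 1‖ ≤ 2 * |d| := by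
        refine le_trans (Complex.norm_exp_sub_one_le (by rw [habs]; exact hphase1)) ?_
        rw [habs]
      rw [h1]
      calc ‖A‖ * ‖Complex.exp (Complex.I * ((d:ℝ):ℂ)) - 1‖ ≤ ‖A‖ * (2 * |d|) :=
            mul_le_mul_of_nonneg_left h2 (norm_nonneg _)
      _ ≤ ‖A‖ * (2 * (|ω| * (1/x))) := by
            refine mul_le_mul_of_nonneg_left ?_ (norm_nonneg _)
            linarith
      _ = 2 * (‖A‖ * |ω|) * (1/x) := by ring
    -- assemble
    have hnormz : ‖A‖ = ‖z‖ := by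
      rw [hz, show Complex.I * ((ω:ℂ) * ((chi x:ℝ):ℂ)) =
        Complex.I * ((ω * chi x : ℝ) : ℂ) by push_cast; ring,
        norm_mul, norm_exp_I_mul, mul_one]
    have hstep : ‖A‖ ≤ |z.im| + |z'.re| + ‖z - z'‖ := by
      have h1 := Complex.norm_le_abs_re_add_abs_im z
      have h3 : |z.re - z'.re| ≤ ‖z - z'‖ := by
        rw [show z.re - z'.re = (z - z').re by simp [Complex.sub_re]]
        exact Complex.abs_re_le_norm _
      have h2 : |z.re| ≤ |z'.re| + |z.re - z'.re| := by
        calc |z.re| = |z'.re + (z.re - z'.re)| := by ring_nf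
        _ ≤ |z'.re| + |z.re - z'.re| := abs_add_le _ _
      rw [hnormz]
      linarith
    have hsq : C * Real.sqrt x * x ^ (-Δ) ≤ 2 * C * x ^ ((1:ℝ)/2 - Δ) := by
      have hEq : x ^ ((1:ℝ)/2) * x ^ (-Δ) = x ^ ((1:ℝ)/2 - Δ) := by
        rw [← Real.rpow_add hx0, show (1:ℝ)/2 + -Δ = (1:ℝ)/2 - Δ by ring]
      have hr : (0:ℝ) ≤ x ^ ((1:ℝ)/2 - Δ) := Real.rpow_nonneg (le_of_lt hx0) _
      calc C * Real.sqrt x * x ^ (-Δ) = C * (x ^ ((1:ℝ)/2) * x ^ (-Δ)) := by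
            rw [Real.sqrt_eq_rpow]; ring
      _ = C * x ^ ((1:ℝ)/2 - Δ) := by rw [hEq]
      _ ≤ 2 * C * x ^ ((1:ℝ)/2 - Δ) := by nlinarith
    calc ‖A‖ ≤ |z.im| + |z'.re| + ‖z - z'‖ := hstep
    _ ≤ (C * Real.sqrt x * x ^ (-Δ)) + (C * Real.sqrt x * x ^ (-Δ)) + 2*(‖A‖*|ω|) * (1/x) := by
          linarith
    _ ≤ 4*C * (x:ℝ) ^ ((1:ℝ)/2 - Δ) + 2*(‖A‖*|ω|) * (1/(x:ℝ)) := by linarith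
  -- limit
  have hten : Filter.Tendsto
      (fun m : ℕ => 4*C * (m:ℝ) ^ ((1:ℝ)/2 - Δ) + 2*(‖A‖*|ω|) * (1/(m:ℝ)))
      Filter.atTop (nhds 0) := by
    have h1 : Filter.Tendsto (fun m : ℕ => ((m:ℝ) ^ ((1:ℝ)/2 - Δ))) Filter.atTop (nhds 0) := by
      have := (tendsto_rpow_neg_atTop (show (0:ℝ) < Δ - 1/2 by linarith)).comp
        (tendsto_natCast_atTop_atTop (R := ℝ))
      simpa [Function.comp_def, show ∀ m:ℕ, -(Δ - 1/2) = (1:ℝ)/2 - Δ from fun _ => by ring] using this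
    have h2 := tendsto_one_div_atTop_nhds_zero_nat (𝕜 := ℝ)
    have := (h1.const_mul (4*C)).add (h2.const_mul (2*(‖A‖*|ω|)))
    simpa using this
  have hA0 : ‖A‖ ≤ 0 := ge_of_tendsto hten (Filter.eventually_atTop.2 ⟨M₁, key⟩)
  simpa using le_antisymm hA0 (norm_nonneg A)

noncomputable def theta (k n : ℕ) : ℝ :=
  max 0 (min 1 ((2 * Real.log k - Real.log n) / Real.log k))

lemma theta_eq_one {k n : ℕ} (hk : 0 < Real.log k) (hn : n ≤ k) : theta k n = 1 := by
  have hlog : Real.log n ≤ Real.log k := by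
    rcases Nat.eq_zero_or_pos n with h | h
    · simp [h, le_of_lt hk]
    · exact Real.log_le_log (by exact_mod_cast h) (by exact_mod_cast hn)
  have h1 : (1:ℝ) ≤ (2 * Real.log k - Real.log n) / Real.log k := by
    rw [le_div_iff₀ hk]; linarith
  rw [theta, min_eq_left h1, max_eq_right (by norm_num)]

lemma theta_eq_zero {k n : ℕ} (hk : 0 < Real.log k) (hn : k^2 ≤ n) : theta k n = 0 := by
  have hk1 : (1:ℝ) < (k:ℝ) := by
    by_contra hc
    push_neg at hc
    have : Real.log k ≤ 0 := Real.log_nonpos (by positivity) hc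
    linarith
  have hlog : 2 * Real.log k ≤ Real.log n := by
    have hkpos : (0:ℝ) < ((k^2:ℕ):ℝ) := by push_cast; nlinarith
    have h1 : Real.log (k^2 : ℕ) ≤ Real.log n :=
      Real.log_le_log hkpos (by exact_mod_cast hn)
    have h2 : Real.log ((k:ℝ)^2) = 2 * Real.log k := by
      rw [Real.log_pow]; push_cast; ring
    rw [show ((k^2 : ℕ):ℝ) = (k:ℝ)^2 by push_cast; ring, h2] at h1
    exact h1
  have h1 : (2 * Real.log k - Real.log n) / Real.log k ≤ 0 :=
    div_nonpos_of_nonpos_of_nonneg (by linarith) (le_of_lt hk)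
  rw [theta, min_eq_right (by linarith), max_eq_left h1]

lemma log_succ_sub_le {n : ℕ} (hn : 1 ≤ n) :
    Real.log (n+1) - Real.log n ≤ 1 / (n:ℝ) := by
  have hn0 : (0:ℝ) < n := by exact_mod_cast hn
  have h := Real.log_le_sub_one_of_pos (show (0:ℝ) < ((n:ℝ)+1)/n by positivity)
  rw [Real.log_div (by positivity) (by positivity)] at h
  have : ((n:ℝ)+1)/n - 1 = 1/n := by field_simp; ring
  linarith

lemma log_succ_sub_nonneg (n : ℕ) : 0 ≤ Real.log (n+1) - Real.log n := by
  rcases Nat.eq_zero_or_pos n with h | h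
  · simp [h]
  · have := Real.log_le_log (show (0:ℝ) < n by exact_mod_cast h)
      (show (n:ℝ) ≤ (n:ℝ)+1 by linarith)
    linarith

lemma theta_diff_le {k n : ℕ} (hk : 0 < Real.log k) (hn : 1 ≤ n) :
    |theta k (n+1) - theta k n| ≤ 1 / ((n:ℝ) * Real.log k) := by
  have key : ∀ a b : ℝ, |max 0 (min 1 a) - max 0 (min 1 b)| ≤ |a - b| := by
    intro a b
    calc |max 0 (min 1 a) - max 0 (min 1 b)| = |(min 1 a) ⊔ 0 - (min 1 b) ⊔ 0| := by
          rw [max_comm 0 _, max_comm 0 _]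
    _ ≤ |min 1 a - min 1 b| := abs_max_sub_max_le_abs _ _ _
    _ ≤ max |1 - 1| |a - b| := abs_min_sub_min_le_max _ _ _ _
    _ = |a - b| := by simp
  refine le_trans (key _ _) ?_
  have hc : ((n+1:ℕ):ℝ) = (n:ℝ)+1 := by push_cast; ring
  rw [hc, div_sub_div_same, show (2 * Real.log k - Real.log (n+1)) - (2 * Real.log k - Real.log n)
    = -(Real.log ((n:ℝ)+1) - Real.log n) by ring, abs_div, abs_neg,
    abs_of_nonneg (log_succ_sub_nonneg n), abs_of_pos hk]
  rw [div_le_div_iff₀ hk (by positivity)]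
  have h1 := log_succ_sub_le hn
  have hn0 : (0:ℝ) < n := by exact_mod_cast hn
  calc (Real.log (n+1) - Real.log n) * ((n:ℝ) * Real.log k)
      ≤ (1/(n:ℝ)) * ((n:ℝ) * Real.log k) := by
        apply mul_le_mul_of_nonneg_right h1; positivity
  _ = 1 * Real.log k := by field_simp

lemma one_le_log_of_three_le {k : ℕ} (hk : 3 ≤ k) : 1 ≤ Real.log k := by
  have h1 : Real.exp 1 < 3 := lt_trans Real.exp_one_lt_d9 (by norm_num)
  have h2 : Real.exp 1 ≤ (k:ℝ) := le_trans (le_of_lt h1) (by exact_mod_cast hk)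
  calc (1:ℝ) = Real.log (Real.exp 1) := (Real.log_exp 1).symm
  _ ≤ Real.log k := Real.log_le_log (Real.exp_pos 1) h2

lemma harmonic_icc_le (a : ℕ) (ha : 1 ≤ a) (b : ℕ) (hab : a ≤ b) :
    (∑ n ∈ Finset.Icc (a+1) b, (1:ℝ)/n) ≤ Real.log b - Real.log a := by
  induction b, hab using Nat.le_induction with
  | base =>
      rw [show Finset.Icc (a+1) a = ∅ by rw [Finset.Icc_eq_empty]; omega]
      simp
  | succ b hab ih =>
      rw [Finset.sum_Icc_succ_top (by omega)]
      have h1 := ih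
      have h2 : (1:ℝ)/((b:ℝ)+1) ≤ Real.log (b+1) - Real.log b := by
        have hb1 : 1 ≤ b := le_trans ha hab
        have hb0 : (0:ℝ) < b := by exact_mod_cast hb1
        have h := Real.log_le_sub_one_of_pos (show (0:ℝ) < (b:ℝ)/((b:ℝ)+1) by positivity)
        rw [Real.log_div (by positivity) (by positivity)] at h
        have : (b:ℝ)/((b:ℝ)+1) - 1 = -(1/((b:ℝ)+1)) := by field_simp; ring
        linarith
      have hcast : ((b+1 : ℕ):ℝ) = (b:ℝ)+1 := by push_cast; ring
      rw [hcast]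
      linarith


lemma HI_smul (c : ℂ) (a : ℕ → ℂ) (n : ℕ) :
    HI (fun j => c * a j) n = c * HI a n := by
  rw [HI, HI]
  split_ifs <;> ring

lemma err_identity {ω : ℝ} {φ : ℕ → ℂ} (hrec : SolvesRec ω φ) (θ : ℕ → ℝ) (n : ℕ)
    (hn : 1 ≤ n) :
    HI (fun j => ((θ j : ℝ) : ℂ) * φ j) n - (ω:ℂ) * (((θ n : ℝ):ℂ) * φ n) =
      Complex.I * ((n : ℂ) / 2 + 3 / 4) * (((θ (n+1) - θ n : ℝ)):ℂ) * φ (n + 1) -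
        Complex.I * ((n : ℂ) / 2 + 1 / 4) * (((θ (n-1) - θ n : ℝ)):ℂ) * φ (n - 1) := by
  match n, hn with
  | 1, _ =>
      have hr := hrec.2 1 le_rfl
      rw [HI, if_neg (by norm_num), if_pos rfl]
      simp only [show (1:ℕ) - 1 = 0 from rfl, hrec.1, mul_zero, sub_zero] at hr ⊢
      push_cast at hr ⊢
      rw [show ((1:ℂ)/2 + 3/4) = 5/4 by norm_num] at hr
      linear_combination (-(θ 1 : ℂ)) * hr
  | (m+2), _ =>
      have hr := hrec.2 (m+2) (by omega)
      rw [HI, if_neg (by omega), if_neg (by omega)]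
      simp only [show (m+2) - 1 = m+1 from rfl] at hr ⊢
      push_cast at hr ⊢
      linear_combination (-(θ (m+2) : ℂ)) * hr

lemma rpow_half_div_bound (x : ℝ) (hx : 1 ≤ x) :
    (x/2) ^ (-(1/2) : ℝ) ≤ 2 * (Real.sqrt x)⁻¹ := by
  have hx0 : (0:ℝ) < x := by linarith
  have h1 : (x/2) ^ (-(1/2) : ℝ) = (Real.sqrt (x/2))⁻¹ := by
    rw [Real.rpow_neg (by positivity), Real.sqrt_eq_rpow]
  have hs2 : Real.sqrt 2 ≤ 2 := by
    nlinarith [Real.sqrt_nonneg 2, Real.sq_sqrt (show (0:ℝ) ≤ 2 by norm_num)]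
  have hs2' : (0:ℝ) < Real.sqrt 2 := Real.sqrt_pos.2 (by norm_num)
  have h2 : Real.sqrt x / 2 ≤ Real.sqrt (x/2) := by
    rw [Real.sqrt_div hx0.le]
    gcongr
  have h3 : (0:ℝ) < Real.sqrt x / 2 := by positivity
  rw [h1]
  calc (Real.sqrt (x/2))⁻¹ ≤ (Real.sqrt x / 2)⁻¹ := inv_anti₀ h3 h2
  _ = 2 * (Real.sqrt x)⁻¹ := by field_simp

lemma norm_scale_sq (c : ℝ) (hc : 0 ≤ c) (z : ℂ) : ‖(c:ℂ) * z‖^2 = c^2 * ‖z‖^2 := by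
  rw [norm_mul, Complex.norm_real, Real.norm_eq_abs, abs_of_nonneg hc, mul_pow]

lemma norm_I_coeff (x d : ℝ) (hx : 0 ≤ x) (ψ : ℂ) :
    ‖Complex.I * ((x:ℝ):ℂ) * ((d:ℝ):ℂ) * ψ‖ = x * (|d| * ‖ψ‖) := by
  rw [norm_mul, norm_mul, norm_mul, Complex.norm_I, one_mul, Complex.norm_real,
    Complex.norm_real, Real.norm_eq_abs, Real.norm_eq_abs, abs_of_nonneg hx, mul_assoc]

lemma err_term_bound {ω : ℝ} {φ : ℕ → ℂ} (hrec : SolvesRec ω φ) {B3 : ℝ} (hB3 : 0 < B3)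
    {N₁ : ℕ} (hφb : ∀ j : ℕ, N₁ ≤ j → ‖φ j‖ ≤ B3 * (Real.sqrt j)⁻¹)
    {m n : ℕ} (hm3 : 3 ≤ m) (hmN : N₁ + 2 ≤ m) (hn : m ≤ n) :
    ‖HI (fun j => ((theta m j : ℝ):ℂ) * φ j) n - (ω:ℂ) * (((theta m n : ℝ):ℂ) * φ n)‖^2
      ≤ 36 * B3^2 / (Real.log m)^2 * (1/(n:ℝ)) := by
  have hL : 1 ≤ Real.log m := one_le_log_of_three_le hm3
  have hLpos : 0 < Real.log m := by linarith
  set L := Real.log m with hLdef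
  have hn3 : 3 ≤ n := le_trans hm3 hn
  have hn1 : 1 ≤ n := by omega
  have hnR : (3:ℝ) ≤ (n:ℝ) := by exact_mod_cast hn3
  have hsn : 0 < Real.sqrt n := Real.sqrt_pos.2 (by linarith)
  have hsq : Real.sqrt n ^ 2 = (n:ℝ) := Real.sq_sqrt (by linarith)
  rw [err_identity hrec _ n hn1]
  have hc1 : Complex.I * ((n:ℂ)/2 + 3/4) * (((theta m (n+1) - theta m n : ℝ)):ℂ) * φ (n+1)
      = Complex.I * ((((n:ℝ)/2 + 3/4 : ℝ)):ℂ) * (((theta m (n+1) - theta m n : ℝ)):ℂ) * φ (n+1) := by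
    push_cast; ring
  have hc2 : Complex.I * ((n:ℂ)/2 + 1/4) * (((theta m (n-1) - theta m n : ℝ)):ℂ) * φ (n-1)
      = Complex.I * ((((n:ℝ)/2 + 1/4 : ℝ)):ℂ) * (((theta m (n-1) - theta m n : ℝ)):ℂ) * φ (n-1) := by
    push_cast; ring
  have hd1 : |theta m (n+1) - theta m n| ≤ 1/((n:ℝ) * L) := theta_diff_le hLpos hn1
  have hcastn1 : ((n-1:ℕ):ℝ) = (n:ℝ) - 1 := by
    have h1 : (1:ℕ) ≤ n := hn1
    push_cast [h1]; ring
  have hd2 : |theta m (n-1) - theta m n| ≤ 2/((n:ℝ) * L) := by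
    have h := theta_diff_le (k := m) (n := n-1) hLpos (by omega)
    rw [show n - 1 + 1 = n by omega] at h
    rw [abs_sub_comm]
    refine le_trans h ?_
    rw [hcastn1, div_le_div_iff₀ (by nlinarith) (by nlinarith)]
    nlinarith
  have hφ1 : ‖φ (n+1)‖ ≤ B3 * (Real.sqrt n)⁻¹ := by
    refine le_trans (hφb (n+1) (by omega)) ?_
    have h1 : Real.sqrt n ≤ Real.sqrt ((n+1:ℕ):ℝ) := Real.sqrt_le_sqrt (by push_cast; linarith)
    have h2 : (0:ℝ) < Real.sqrt ((n+1:ℕ):ℝ) := lt_of_lt_of_le hsn h1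
    exact mul_le_mul_of_nonneg_left (inv_anti₀ hsn h1) (le_of_lt hB3)
  have hφ2 : ‖φ (n-1)‖ ≤ B3 * (2 * (Real.sqrt n)⁻¹) := by
    refine le_trans (hφb (n-1) (by omega)) ?_
    have h1 : Real.sqrt n / 2 ≤ Real.sqrt ((n-1:ℕ):ℝ) := by
      rw [hcastn1]
      have h2 : Real.sqrt n / 2 = Real.sqrt n * (1/2) := by ring
      rw [h2, show (1:ℝ)/2 = Real.sqrt (1/4) by
        rw [show (1:ℝ)/4 = (1/2)^2 by norm_num, Real.sqrt_sq (by norm_num)],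
        ← Real.sqrt_mul (by linarith)]
      apply Real.sqrt_le_sqrt; nlinarith
    have h3 : (0:ℝ) < Real.sqrt n / 2 := by positivity
    calc B3 * (Real.sqrt ((n-1:ℕ):ℝ))⁻¹ ≤ B3 * (Real.sqrt n / 2)⁻¹ :=
          mul_le_mul_of_nonneg_left (inv_anti₀ h3 h1) hB3.le
    _ = B3 * (2 * (Real.sqrt n)⁻¹) := by
          rw [div_eq_mul_inv, mul_inv, inv_inv]; ring
  have hterm1 : ‖Complex.I * ((((n:ℝ)/2 + 3/4 : ℝ)):ℂ) *
      (((theta m (n+1) - theta m n : ℝ)):ℂ) * φ (n+1)‖ ≤ B3 / (L * Real.sqrt n) := by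
    rw [norm_I_coeff _ _ (by positivity) _]
    calc ((n:ℝ)/2+3/4) * (|theta m (n+1) - theta m n| * ‖φ (n+1)‖)
        ≤ (n:ℝ) * ((1/((n:ℝ)*L)) * (B3 * (Real.sqrt n)⁻¹)) := by
          apply mul_le_mul (by linarith)
            (mul_le_mul hd1 hφ1 (norm_nonneg _) (by positivity)) (by positivity) (by linarith)
    _ = B3 / (L * Real.sqrt n) := by field_simp
  have hterm2 : ‖Complex.I * ((((n:ℝ)/2 + 1/4 : ℝ)):ℂ) *
      (((theta m (n-1) - theta m n : ℝ)):ℂ) * φ (n-1)‖ ≤ 4 * B3 / (L * Real.sqrt n) := by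
    rw [norm_I_coeff _ _ (by positivity) _]
    calc ((n:ℝ)/2+1/4) * (|theta m (n-1) - theta m n| * ‖φ (n-1)‖)
        ≤ (n:ℝ) * ((2/((n:ℝ)*L)) * (B3 * (2 * (Real.sqrt n)⁻¹))) := by
          apply mul_le_mul (by linarith)
            (mul_le_mul hd2 hφ2 (norm_nonneg _) (by positivity)) (by positivity) (by linarith)
    _ = 4 * B3 / (L * Real.sqrt n) := by field_simp; ring
  have htot : ‖Complex.I * ((n:ℂ)/2 + 3/4) * (((theta m (n+1) - theta m n : ℝ)):ℂ) * φ (n+1) -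
      Complex.I * ((n:ℂ)/2 + 1/4) * (((theta m (n-1) - theta m n : ℝ)):ℂ) * φ (n-1)‖ ≤
      5 * B3 / (L * Real.sqrt n) := by
    rw [hc1, hc2]
    refine le_trans (norm_sub_le _ _) ?_
    have : B3 / (L * Real.sqrt n) + 4 * B3 / (L * Real.sqrt n) = 5 * B3 / (L * Real.sqrt n) := by
      ring
    linarith
  calc ‖Complex.I * ((n:ℂ)/2 + 3/4) * (((theta m (n+1) - theta m n : ℝ)):ℂ) * φ (n+1) -
      Complex.I * ((n:ℂ)/2 + 1/4) * (((theta m (n-1) - theta m n : ℝ)):ℂ) * φ (n-1)‖^2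
      ≤ (5 * B3 / (L * Real.sqrt n))^2 := pow_le_pow_left₀ (norm_nonneg _) htot 2
  _ = 25 * B3^2 / L^2 * (1/(n:ℝ)) := by
      rw [div_pow, mul_pow, mul_pow, hsq]; ring
  _ ≤ 36 * B3^2 / L^2 * (1/(n:ℝ)) := by
      apply mul_le_mul_of_nonneg_right _ (by positivity)
      apply div_le_div_of_nonneg_right (by nlinarith) (by positivity)

set_option maxHeartbeats 1000000 in
/-- Weyl-criterion form: if there is a solution φ of the eigenvalue recurrence for ω
with plane-wave asymptotics of some amplitude A ≠ 0, then ω lies in the approximate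
point spectrum of H_I on ℓ²(ℕ, ℂ): there is a sequence v_k of normalized
square-summable sequences with H_I v_k square-summable and ‖H_I v_k − ω·v_k‖² → 0. -/
theorem omega_in_approx_point_spectrum (ω : ℝ)
    (h : ∃ A : ℂ, A ≠ 0 ∧ ∃ φ : ℕ → ℂ, SolvesRec ω φ ∧ PlaneWaveAsymp A ω φ) :
    ∃ v : ℕ → ℕ → ℂ,
      (∀ k, Summable (fun n : ℕ => ‖v k n‖ ^ 2)) ∧
      (∀ k, ∑' n : ℕ, ‖v k n‖ ^ 2 = 1) ∧
      (∀ k, Summable (fun n : ℕ => ‖HI (v k) n‖ ^ 2)) ∧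
      Filter.Tendsto (fun k : ℕ => ∑' n : ℕ, ‖HI (v k) n - (ω : ℂ) * v k n‖ ^ 2)
        Filter.atTop (nhds 0) := by
  obtain ⟨A, hA, φ, hrec, C, hC, Δ, hΔ, N₀, hb⟩ := h
  -- φ is not identically zero
  have hex : ∃ n₀, φ n₀ ≠ 0 := by
    by_contra hcon
    push_neg at hcon
    refine hA (amp_eq_zero (ω := ω) (N₀ := N₀) hC hΔ ?_)
    intro n hn
    have := hb n hn
    rwa [hcon n, zero_sub, norm_neg] at this
  obtain ⟨n₀, hn₀⟩ := hex
  have hupper := phi_upper hC hΔ hb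
  set N₁ : ℕ := max N₀ 2 with hN₁def
  set B3 : ℝ := 2 * (2 * ‖A‖ + C) with hB3def
  have hB3 : 0 < B3 := by rw [hB3def]; positivity
  have hφb : ∀ j : ℕ, N₁ ≤ j → ‖φ j‖ ≤ B3 * (Real.sqrt j)⁻¹ := by
    intro j hj
    have h1 := hupper j hj
    have hj2 : (2:ℕ) ≤ j := le_trans (le_max_right _ _) hj
    have hj1 : (1:ℝ) ≤ (j:ℝ) := by
      have : (2:ℝ) ≤ (j:ℝ) := by exact_mod_cast hj2
      linarith
    have h2 : ((j:ℝ)/2) ^ (-(1/2):ℝ) ≤ 2 * (Real.sqrt j)⁻¹ := rpow_half_div_bound _ hj1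
    calc ‖φ j‖ ≤ (2*‖A‖+C) * ((j:ℝ)/2)^(-(1/2):ℝ) := h1
    _ ≤ (2*‖A‖+C) * (2*(Real.sqrt j)⁻¹) := by
        apply mul_le_mul_of_nonneg_left h2 (by positivity)
    _ = B3 * (Real.sqrt j)⁻¹ := by rw [hB3def]; ring
  set K : ℕ := max (max (N₁ + 2) (n₀ + 1)) 3 with hKdef
  have hK3 : 3 ≤ K := le_max_right _ _
  have hKN : N₁ + 2 ≤ K := le_trans (le_max_left _ _) (le_max_left _ _)
  have hKn₀ : n₀ + 1 ≤ K := le_trans (le_max_right _ _) (le_max_left _ _)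
  set c₀ : ℝ := ‖φ n₀‖^2 with hc₀def
  have hc₀ : 0 < c₀ := by
    have := norm_pos_iff.2 hn₀
    rw [hc₀def]; positivity
  obtain ⟨w, hwdef⟩ : ∃ w : ℕ → ℕ → ℂ, w = fun k n => ((theta (k+K) n : ℝ):ℂ) * φ n :=
    ⟨_, rfl⟩
  obtain ⟨S, hSdef⟩ : ∃ S : ℕ → ℝ, S = fun k => ∑ n ∈ Finset.range ((k+K)^2), ‖w k n‖^2 :=
    ⟨_, rfl⟩
  obtain ⟨v, hvdef⟩ : ∃ v : ℕ → ℕ → ℂ,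
      v = fun k n => (((Real.sqrt (S k))⁻¹ : ℝ) : ℂ) * w k n := ⟨_, rfl⟩
  have hm3 : ∀ k : ℕ, 3 ≤ k + K := fun k => by omega
  have hL1 : ∀ k : ℕ, 1 ≤ Real.log ((k+K:ℕ):ℝ) := fun k => one_le_log_of_three_le (hm3 k)
  have hLpos : ∀ k : ℕ, 0 < Real.log ((k+K:ℕ):ℝ) := fun k => lt_of_lt_of_le one_pos (hL1 k)
  have hsq_le : ∀ k : ℕ, k + K ≤ (k+K)^2 := fun k => by nlinarith [hm3 k]
  have hwz : ∀ k n : ℕ, (k+K)^2 ≤ n → w k n = 0 := by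
    intro k n hn
    rw [hwdef]
    simp only [theta_eq_zero (hLpos k) hn]
    simp
  have hSlb : ∀ k, c₀ ≤ S k := by
    intro k
    have hmem : n₀ ∈ Finset.range ((k+K)^2) := Finset.mem_range.2 (by
      have := hsq_le k; omega)
    have hterm : ‖w k n₀‖^2 = c₀ := by
      rw [hwdef]
      simp only [theta_eq_one (hLpos k) (show n₀ ≤ k + K by omega)]
      rw [hc₀def]
      norm_num
    calc c₀ = ‖w k n₀‖^2 := hterm.symm
    _ ≤ ∑ n ∈ Finset.range ((k+K)^2), ‖w k n‖^2 :=
        Finset.single_le_sum (f := fun n => ‖w k n‖^2) (fun i _ => by positivity) hmem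
    _ = S k := by rw [hSdef]
  have hSpos : ∀ k, 0 < S k := fun k => lt_of_lt_of_le hc₀ (hSlb k)
  have hcpos : ∀ k, 0 < (Real.sqrt (S k))⁻¹ := fun k =>
    inv_pos.2 (Real.sqrt_pos.2 (hSpos k))
  have hcsq : ∀ k, ((Real.sqrt (S k))⁻¹)^2 = (S k)⁻¹ := by
    intro k
    rw [inv_pow, Real.sq_sqrt (le_of_lt (hSpos k))]
  have hvz : ∀ k n : ℕ, (k+K)^2 ≤ n → v k n = 0 := by
    intro k n hn
    rw [hvdef]
    simp only [hwz k n hn, mul_zero]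
  have hvnorm : ∀ k n, ‖v k n‖^2 = ((Real.sqrt (S k))⁻¹)^2 * ‖w k n‖^2 := by
    intro k n
    rw [hvdef]
    exact norm_scale_sq _ (le_of_lt (hcpos k)) _
  refine ⟨v, ?_, ?_, ?_, ?_⟩
  · intro k
    apply summable_of_ne_finset_zero (s := Finset.range ((k+K)^2))
    intro n hn
    rw [hvz k n (by simpa using Finset.mem_range.not.1 hn), norm_zero]
    norm_num
  · intro k
    rw [tsum_eq_sum (s := Finset.range ((k+K)^2)) (by
      intro n hn
      rw [hvz k n (by simpa using Finset.mem_range.not.1 hn), norm_zero]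
      norm_num)]
    rw [Finset.sum_congr rfl (fun n _ => hvnorm k n), ← Finset.mul_sum, hcsq k,
      show ∑ n ∈ Finset.range ((k+K)^2), ‖w k n‖^2 = S k by rw [hSdef]]
    exact inv_mul_cancel₀ (ne_of_gt (hSpos k))
  · intro k
    apply summable_of_ne_finset_zero (s := Finset.range ((k+K)^2 + 2))
    intro n hn
    have hn' : (k+K)^2 + 2 ≤ n := by simpa using Finset.mem_range.not.1 hn
    have h0 : HI (v k) n = 0 := by
      rw [HI, if_neg (by omega), if_neg (by omega),
        hvz k (n+1) (by omega), hvz k (n-1) (by omega)]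
      ring
    rw [h0, norm_zero]
    norm_num
  · set D₀ : ℝ := 108 * B3^2 / c₀ with hD₀def
    have hveq : ∀ k n, HI (v k) n - (ω:ℂ) * v k n =
        (((Real.sqrt (S k))⁻¹:ℝ):ℂ) * (HI (w k) n - (ω:ℂ) * w k n) := by
      intro k n
      have h1 : HI (v k) n = (((Real.sqrt (S k))⁻¹:ℝ):ℂ) * HI (w k) n := by
        have he : v k = fun j => (((Real.sqrt (S k))⁻¹:ℝ):ℂ) * w k j := by rw [hvdef]
        rw [he, HI_smul]
      rw [h1, show v k n = (((Real.sqrt (S k))⁻¹:ℝ):ℂ) * w k n by rw [hvdef]]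
      ring
    have hwIdent : ∀ k, w k = fun j => ((theta (k+K) j : ℝ):ℂ) * φ j := fun k => by rw [hwdef]
    have hesupp : ∀ k : ℕ, ∀ n ∉ Finset.Icc (k+K) ((k+K)^2+1),
        HI (w k) n - (ω:ℂ) * w k n = 0 := by
      intro k n hn
      rw [Finset.mem_Icc] at hn
      push_neg at hn
      rcases Nat.lt_or_ge n (k+K) with hlt | hge
      · rcases Nat.eq_zero_or_pos n with h0 | h1
        · subst h0
          rw [show HI (w k) 0 = 0 by rw [HI]; simp]
          rw [hwIdent k]
          simp [hrec.1]
        · rw [hwIdent k, err_identity hrec _ n h1,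
            theta_eq_one (hLpos k) (show n+1 ≤ k+K by omega),
            theta_eq_one (hLpos k) (show n ≤ k+K by omega),
            theta_eq_one (hLpos k) (show n-1 ≤ k+K by omega)]
          norm_num
      · have hge2 : (k+K)^2 + 2 ≤ n := by
          have := hn hge; omega
        rw [hwIdent k, err_identity hrec _ n (by omega),
          theta_eq_zero (hLpos k) (show (k+K)^2 ≤ n+1 by omega),
          theta_eq_zero (hLpos k) (show (k+K)^2 ≤ n by omega),
          theta_eq_zero (hLpos k) (show (k+K)^2 ≤ n-1 by omega)]
        norm_num
    have hharm : ∀ k : ℕ, (∑ n ∈ Finset.Icc (k+K) ((k+K)^2+1), (1:ℝ)/n) ≤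
        3 * Real.log ((k+K:ℕ):ℝ) := by
      intro k
      set m : ℕ := k + K with hmdef
      have hm : 3 ≤ m := hm3 k
      have h0 := harmonic_icc_le (m-1) (by omega) (m^2+1) (by
        have hq := hsq_le k; rw [← hmdef] at hq; omega)
      rw [show m - 1 + 1 = m by omega] at h0
      have hm1R : (1:ℝ) ≤ ((m-1:ℕ):ℝ) := by
        have : (1:ℕ) ≤ m - 1 := by omega
        exact_mod_cast this
      have hlog1 : 0 ≤ Real.log ((m-1:ℕ):ℝ) := Real.log_nonneg hm1R
      have hmR : (3:ℝ) ≤ (m:ℝ) := by exact_mod_cast hm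
      have hlog2 : Real.log ((m^2+1:ℕ):ℝ) ≤ 1 + 2 * Real.log (m:ℝ) := by
        have hle : ((m^2+1:ℕ):ℝ) ≤ 2*(m:ℝ)^2 := by push_cast; nlinarith
        calc Real.log ((m^2+1:ℕ):ℝ) ≤ Real.log (2*(m:ℝ)^2) :=
              Real.log_le_log (by positivity) hle
        _ = Real.log 2 + 2*Real.log (m:ℝ) := by
              rw [Real.log_mul (by norm_num) (by positivity), Real.log_pow]
              push_cast; ring
        _ ≤ 1 + 2*Real.log (m:ℝ) := by
              have := Real.log_two_lt_d9
              linarith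
      have hL := hL1 k
      linarith
    have hEk : ∀ k : ℕ, (∑' n : ℕ, ‖HI (v k) n - (ω:ℂ) * v k n‖^2) ≤
        D₀ * (Real.log ((k+K:ℕ):ℝ))⁻¹ := by
      intro k
      set L : ℝ := Real.log ((k+K:ℕ):ℝ) with hLdef
      have hL := hL1 k
      have hLp := hLpos k
      rw [tsum_eq_sum (s := Finset.Icc (k+K) ((k+K)^2+1)) (by
        intro n hn
        rw [hveq k n, hesupp k n hn, mul_zero, norm_zero]
        norm_num)]
      have hptw : ∀ n ∈ Finset.Icc (k+K) ((k+K)^2+1),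
          ‖HI (v k) n - (ω:ℂ) * v k n‖^2 ≤
            ((Real.sqrt (S k))⁻¹)^2 * (36 * B3^2 / L^2 * (1/(n:ℝ))) := by
        intro n hn
        rw [hveq k n, norm_scale_sq _ (le_of_lt (hcpos k)) _]
        apply mul_le_mul_of_nonneg_left _ (by positivity)
        rw [hwIdent k]
        exact err_term_bound hrec hB3 hφb (hm3 k) (by omega)
          (Finset.mem_Icc.1 hn).1
      calc (∑ n ∈ Finset.Icc (k+K) ((k+K)^2+1), ‖HI (v k) n - (ω:ℂ) * v k n‖^2)
          ≤ ∑ n ∈ Finset.Icc (k+K) ((k+K)^2+1),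
            ((Real.sqrt (S k))⁻¹)^2 * (36 * B3^2 / L^2 * (1/(n:ℝ))) :=
            Finset.sum_le_sum hptw
      _ = ((Real.sqrt (S k))⁻¹)^2 * (36 * B3^2 / L^2 *
            (∑ n ∈ Finset.Icc (k+K) ((k+K)^2+1), (1:ℝ)/n)) := by
            rw [← Finset.mul_sum, ← Finset.mul_sum]
      _ ≤ (S k)⁻¹ * (36 * B3^2 / L^2 * (3 * L)) := by
            rw [hcsq k]
            apply mul_le_mul_of_nonneg_left _ (le_of_lt (inv_pos.2 (hSpos k)))
            apply mul_le_mul_of_nonneg_left (hharm k) (by positivity)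
      _ ≤ c₀⁻¹ * (36 * B3^2 / L^2 * (3 * L)) := by
            apply mul_le_mul_of_nonneg_right
              (inv_anti₀ hc₀ (hSlb k)) (by positivity)
      _ = D₀ * L⁻¹ := by
            rw [hD₀def]
            field_simp
            ring
    have hnonneg : ∀ k : ℕ, 0 ≤ ∑' n : ℕ, ‖HI (v k) n - (ω:ℂ) * v k n‖^2 :=
      fun k => tsum_nonneg (fun n => by positivity)
    refine squeeze_zero hnonneg hEk ?_
    have h1 : Filter.Tendsto (fun k : ℕ => ((k+K:ℕ):ℝ)) Filter.atTop Filter.atTop :=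
      tendsto_natCast_atTop_atTop.comp (Filter.tendsto_add_atTop_nat K)
    have h2 : Filter.Tendsto (fun k : ℕ => Real.log ((k+K:ℕ):ℝ)) Filter.atTop Filter.atTop :=
      Real.tendsto_log_atTop.comp h1
    have h3 := h2.inv_tendsto_atTop
    have h4 := h3.const_mul D₀
    simpa using h4
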